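/- For every integer n ≥ 1, every special Jost point x = (x₁,…,x_n) ∈ 𝒥ₙ^{(r)}, and every λ ∈ ℂ with Im λ > 0, the point ([λ]x₁, …, [λ]x_n) belongs to the tuboid 𝒵_{n,+} = {z = (z₁,…,z_n) ∈ (X_d^{(c)})^n : Im z₁ ∈ V₊ and Im(z_j − z_{j−1}) ∈ V₊ for 2 ≤ j ≤ n}. -/
import Mathlib


noncomputable section
open Complex

/-- Minkowski bilinear form on `ℂ^{d+1}`. -/
def minkC (d : ℕ) (z w : Fin (d+1) → ℂ) : ℂ := 2 * z 0 * w 0 - ∑ i, z i * w i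

/-- Minkowski bilinear form on `ℝ^{d+1}`. -/
def minkR (d : ℕ) (x y : Fin (d+1) → ℝ) : ℝ := 2 * x 0 * y 0 - ∑ i, x i * y i

/-- The open forward light cone `V₊`. -/
def Vplus (d : ℕ) : Set (Fin (d+1) → ℝ) := {y | 0 < y 0 ∧ 0 < minkR d y y}

/-- The complexified de Sitter space. -/
def Xc (d : ℕ) (R : ℝ) : Set (Fin (d+1) → ℂ) := {z | minkC d z z = -((R : ℂ)^2)}

/-- The right wedge `W_{(r)}`. -/
def Wr (d : ℕ) : Set (Fin (d+1) → ℝ) :=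
  {x | 0 < x 0 + x (Fin.last d) ∧ x 0 - x (Fin.last d) < 0}

/-- The special Jost set `𝒥ₙ^{(r)}`. -/
def JostR (d n : ℕ) (R : ℝ) : Set (Fin n → Fin (d+1) → ℝ) :=
  {x | (∀ k, minkR d (x k) (x k) = -(R^2)) ∧
       (∀ h : 0 < n, x ⟨0, h⟩ ∈ Wr d) ∧
       (∀ (j : ℕ) (h : j + 1 < n),
          x ⟨j+1, h⟩ - x ⟨j, Nat.lt_of_succ_lt h⟩ ∈ Wr d)}

/-- The special complex Lorentz transformation `[λ]`:
`u([λ]z) = λ u(z)`, `v([λ]z) = λ⁻¹ v(z)`, fixing the transverse coordinates,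
where `u(z) = z⁰ + zᵈ`, `v(z) = z⁰ − zᵈ`. -/
def lamMap (d : ℕ) (lam : ℂ) (z : Fin (d+1) → ℂ) : Fin (d+1) → ℂ :=
  fun i =>
    if i = 0 then
      (lam * (z 0 + z (Fin.last d)) + lam⁻¹ * (z 0 - z (Fin.last d))) / 2
    else if i = Fin.last d then
      (lam * (z 0 + z (Fin.last d)) - lam⁻¹ * (z 0 - z (Fin.last d))) / 2
    else z i

/-- The tuboid `𝒵_{n,+}`: `Im z₁ ∈ V₊` and `Im (z_j − z_{j−1}) ∈ V₊`. -/
def Znp (d n : ℕ) (R : ℝ) : Set (Fin n → Fin (d+1) → ℂ) :=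
  {z | (∀ k, z k ∈ Xc d R) ∧
       (∀ h : 0 < n, (fun i => (z ⟨0, h⟩ i).im) ∈ Vplus d) ∧
       (∀ (j : ℕ) (h : j + 1 < n),
          (fun i => ((z ⟨j+1, h⟩ - z ⟨j, Nat.lt_of_succ_lt h⟩) i).im) ∈ Vplus d)}

lemma zero_ne_last (d : ℕ) (hd : 1 ≤ d) : (0 : Fin (d+1)) ≠ Fin.last d := by
  intro h
  have : (0:ℕ) = d := by simpa [Fin.ext_iff] using h
  omega

lemma sum_split {M : Type*} [AddCommMonoid M] (d : ℕ) (hd : 1 ≤ d) (f : Fin (d+1) → M) :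
    ∑ i, f i = f 0 + f (Fin.last d) + ∑ i ∈ Finset.univ \ {0, Fin.last d}, f i := by
  have h0 := zero_ne_last d hd
  rw [← Finset.sum_sdiff (Finset.subset_univ ({0, Fin.last d} : Finset (Fin (d+1)))),
    Finset.sum_pair h0]
  abel

lemma lamMap_other (d : ℕ) (lam : ℂ) (z : Fin (d+1) → ℂ) {i : Fin (d+1)}
    (h0 : i ≠ 0) (h1 : i ≠ Fin.last d) : lamMap d lam z i = z i := by
  simp [lamMap, h0, h1]

lemma lamMap_zero (d : ℕ) (lam : ℂ) (z : Fin (d+1) → ℂ) :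
    lamMap d lam z 0 = (lam * (z 0 + z (Fin.last d)) + lam⁻¹ * (z 0 - z (Fin.last d))) / 2 := by
  simp [lamMap]

lemma lamMap_last (d : ℕ) (hd : 1 ≤ d) (lam : ℂ) (z : Fin (d+1) → ℂ) :
    lamMap d lam z (Fin.last d)
      = (lam * (z 0 + z (Fin.last d)) - lam⁻¹ * (z 0 - z (Fin.last d))) / 2 := by
  simp [lamMap, (zero_ne_last d hd).symm]

lemma minkC_lamMap (d : ℕ) (hd : 1 ≤ d) (lam : ℂ) (hlam : lam ≠ 0) (z : Fin (d+1) → ℂ) :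
    minkC d (lamMap d lam z) (lamMap d lam z) = minkC d z z := by
  unfold minkC
  rw [sum_split d hd, sum_split d hd (fun i => z i * z i)]
  have hdiff : ∑ i ∈ Finset.univ \ {0, Fin.last d}, lamMap d lam z i * lamMap d lam z i
      = ∑ i ∈ Finset.univ \ {0, Fin.last d}, z i * z i := by
    apply Finset.sum_congr rfl
    intro i hi
    simp only [Finset.mem_sdiff, Finset.mem_insert, Finset.mem_singleton] at hi
    push_neg at hi
    rw [lamMap_other d lam z hi.2.1 hi.2.2]
  rw [hdiff, lamMap_zero, lamMap_last d hd]
  field_simp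
  ring

lemma minkC_cast (d : ℕ) (x y : Fin (d+1) → ℝ) :
    minkC d (fun i => (x i : ℂ)) (fun i => (y i : ℂ)) = ((minkR d x y : ℝ) : ℂ) := by
  simp only [minkC, minkR]
  push_cast
  ring

lemma im_lamMap_zero (d : ℕ) (lam : ℂ) (x : Fin (d+1) → ℝ) :
    ((lamMap d lam (fun i => (x i : ℂ))) 0).im
      = (lam.im * (x 0 + x (Fin.last d)) + (lam⁻¹).im * (x 0 - x (Fin.last d))) / 2 := by
  rw [lamMap_zero]
  simp [Complex.div_im, Complex.add_im, Complex.mul_im]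

lemma im_lamMap_last (d : ℕ) (hd : 1 ≤ d) (lam : ℂ) (x : Fin (d+1) → ℝ) :
    ((lamMap d lam (fun i => (x i : ℂ))) (Fin.last d)).im
      = (lam.im * (x 0 + x (Fin.last d)) - (lam⁻¹).im * (x 0 - x (Fin.last d))) / 2 := by
  rw [lamMap_last d hd]
  simp [Complex.div_im, Complex.sub_im, Complex.mul_im]

lemma wedge_to_Vplus (d : ℕ) (hd : 1 ≤ d) (lam : ℂ) (hlam : 0 < lam.im)
    (x : Fin (d+1) → ℝ) (hx : x ∈ Wr d) :
    (fun i => ((lamMap d lam (fun i => (x i : ℂ))) i).im) ∈ Vplus d := by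
  obtain ⟨hu, hv⟩ := hx
  have hlne : lam ≠ 0 := fun h => by simp [h] at hlam
  have hb : (lam⁻¹).im < 0 := by
    rw [Complex.inv_im]
    have := Complex.normSq_pos.mpr hlne
    exact div_neg_of_neg_of_pos (neg_neg_iff_pos.mpr hlam) this
  set a := lam.im
  set b := (lam⁻¹).im
  set u := x 0 + x (Fin.last d)
  set v := x 0 - x (Fin.last d)
  have h0pos : 0 < (a * u + b * v) / 2 := by
    have := mul_pos hlam hu
    have := mul_pos_of_neg_of_neg hb hv
    positivity
  constructor
  · show 0 < ((lamMap d lam (fun i => (x i : ℂ))) 0).im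
    rw [im_lamMap_zero]
    exact h0pos
  · have hsum : minkR d (fun i => ((lamMap d lam (fun i => (x i : ℂ))) i).im)
        (fun i => ((lamMap d lam (fun i => (x i : ℂ))) i).im)
        = (a * u) * (b * v) := by
      unfold minkR
      rw [sum_split d hd]
      have hdiff : ∑ i ∈ Finset.univ \ {0, Fin.last d},
          ((lamMap d lam (fun i => (x i : ℂ))) i).im * ((lamMap d lam (fun i => (x i : ℂ))) i).im = 0 := by
        apply Finset.sum_eq_zero
        intro i hi
        simp only [Finset.mem_sdiff, Finset.mem_insert, Finset.mem_singleton] at hi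
        push_neg at hi
        rw [lamMap_other d lam _ hi.2.1 hi.2.2]
        simp
      simp only [hdiff, im_lamMap_zero, im_lamMap_last d hd]
      ring
    rw [hsum]
    exact mul_pos (mul_pos hlam hu) (mul_pos_of_neg_of_neg hb hv)

lemma lamMap_sub_cast (d : ℕ) (lam : ℂ) (a b : Fin (d+1) → ℝ) (i : Fin (d+1)) :
    (lamMap d lam (fun j => (a j : ℂ)) - lamMap d lam (fun j => (b j : ℂ))) i
      = lamMap d lam (fun j => (((a - b) j : ℝ) : ℂ)) i := by
  simp only [Pi.sub_apply, lamMap]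
  split_ifs <;> push_cast <;> ring


/-- for every special Jost point `x ∈ 𝒥ₙ^{(r)}` and every `λ` with
`Im λ > 0`, the point `([λ]x₁,…,[λ]x_n)` belongs to the tuboid `𝒵_{n,+}`. -/
theorem stmt7 (d : ℕ) (hd : 1 ≤ d) (R : ℝ) (hR : 0 < R) (n : ℕ) (hn : 1 ≤ n)
    (x : Fin n → Fin (d+1) → ℝ) (hx : x ∈ JostR d n R)
    (lam : ℂ) (hlam : 0 < lam.im) :
    (fun k => lamMap d lam (fun i => ((x k i : ℝ) : ℂ))) ∈ Znp d n R := by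
  obtain ⟨hX, hW0, hWd⟩ := hx
  have hlne : lam ≠ 0 := fun h => by simp [h] at hlam
  refine ⟨?_, ?_, ?_⟩
  · intro k
    show minkC d _ _ = _
    rw [minkC_lamMap d hd lam hlne, minkC_cast, hX k]
    push_cast
    ring
  · intro h
    exact wedge_to_Vplus d hd lam hlam _ (hW0 h)
  · intro j h
    have key := wedge_to_Vplus d hd lam hlam _ (hWd j h)
    have heq : (fun i => (((fun k => lamMap d lam (fun i => ((x k i : ℝ) : ℂ))) ⟨j+1, h⟩
          - (fun k => lamMap d lam (fun i => ((x k i : ℝ) : ℂ))) ⟨j, Nat.lt_of_succ_lt h⟩) i).im)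
        = fun i => ((lamMap d lam (fun i' => (((x ⟨j+1, h⟩ - x ⟨j, Nat.lt_of_succ_lt h⟩) i' : ℝ) : ℂ)) i).im) := by
      funext i
      rw [lamMap_sub_cast]
    exact heq ▸ key
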